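/- Let α ∈ (0,1), let s be a Schur function admitting the representation s(z) = αz + 1 - α + O((1-z)^4) as z tends nontangentially to 1, and let s₁ be a Schur function with liminf_{z →̂ 1} |s₁(z) - 1| > 0 such that s(z) = ((2α - 1 - z(2α+1))·s₁(z) + 1 + z)/(2α + 1 - z(2α-1) - (1+z)·s₁(z)). Then the following assertions are equivalent: (i) s(z) = αz + 1 - α for all z ∈ 𝔻; (ii) s₁(z) = 1 - 2α for all z ∈ 𝔻; (iii) |s₁(z)| ≤ |1 - 2α| for every z ∈ 𝔻; (iv) |(2α + 1 - z(2α-1))·s(z) - 1 - z| ≤ |1 - 2α| · |(2α - 1 - z(2α+1)) + (1+z)·s(z)| for every z ∈ 𝔻; (v) |1 - s(z)|² < (α/(1-α))·(1 - |s(z)|²) for every z ∈ 𝔻. -/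

import Mathlib

/-!
The relation between `s` and `s₁` is equivalent to
`(s - (αz + 1 - α)) E = α (1 - z)² (s₁ - (1 - 2α))` with `E` bounded and nonvanishing on the disk.
Hence (i) ⇔ (ii) pointwise, (iii) ⇔ (iv) is one inequality multiplied by a nonzero factor, and the
contact of order four of `s` gives `s₁(r) = 1 - 2α + O((1 - r)²)` along the radius.

The other implications are boundary rigidity. If `|g| ≤ 1` and `g(r) = 1 + o(1 - r)`, then
`g ≡ 1`: otherwise Schwarz–Pick at `0` gives `1 - |g(r)|² ≳ 1 - r`. Applied to `s₁ / (1 - 2α)`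
this is (iii) ⇒ (ii). Condition (v) says that `t = (s - (1 - α)) / α` maps the disk into itself,
and `t(r) = r + O((1 - r)⁴)`. Schwarz–Pick between `z` and `r → 1` gives Julia's inequality, i.e.
`(1 + t) / (1 - t) - (1 + z) / (1 - z)` has nonnegative real part; it is `o(1 - r)` along the
radius, so its Cayley transform is a Schur function `1 + o(1 - r)`, hence `≡ 1`, and `t(z) = z`.
-/

noncomputable section

open Complex Filter

/-- The open unit disk in the complex plane. -/
def unitDisk : Set ℂ := {z : ℂ | ‖z‖ < 1}

/-- A Schur function: analytic on the open unit disk and bounded by one in modulus there. -/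
def SchurFunction (f : ℂ → ℂ) : Prop :=
  DifferentiableOn ℂ f unitDisk ∧ ∀ z ∈ unitDisk, ‖f z‖ ≤ 1

/-- The Stolz region with parameter `K` at the boundary point `1`. -/
def stolzRegion (K : ℝ) : Set ℂ :=
  {z : ℂ | ‖z‖ < 1 ∧ ‖z - 1‖ < K * (1 - ‖z‖)}

/-- `f(z) = O((z-1)^m)` as `z` tends nontangentially to `1`. -/
def NTBigO (f : ℂ → ℂ) (m : ℕ) : Prop :=
  ∀ K > (1 : ℝ), f =O[nhdsWithin 1 (stolzRegion K)] fun z => (z - 1) ^ m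

/-- `liminf_{z →̂ 1} |f(z) - c| > 0`: within every Stolz region the limit inferior of
`|f(z) - c|` as `z → 1` is strictly positive. -/
def NTLiminfPos (f : ℂ → ℂ) (c : ℂ) : Prop :=
  ∀ K > (1 : ℝ),
    0 < Filter.liminf (fun z => ‖f z - c‖) (nhdsWithin 1 (stolzRegion K))

open Set Metric Asymptotics Topology ComplexConjugate

theorem unitDisk_eq_ball : unitDisk = ball (0 : ℂ) 1 := by
  ext z; simp [unitDisk]

theorem ofReal_mem_unitDisk {r : ℝ} (h₀ : 0 ≤ r) (h₁ : r < 1) : (r : ℂ) ∈ unitDisk := by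
  simpa [unitDisk, abs_of_nonneg h₀]

theorem one_sub_ne_zero_of_mem_unitDisk {z : ℂ} (hz : z ∈ unitDisk) : 1 - z ≠ 0 := fun h => by
  simp [unitDisk, ← sub_eq_zero.1 h] at hz

theorem tendsto_one_sub_nhdsLT_zero : Tendsto (fun r : ℝ => 1 - r) (𝓝[<] 1) (𝓝 0) := by
  refine tendsto_nhdsWithin_of_tendsto_nhds ?_
  simpa using (tendsto_const_nhds.sub tendsto_id : Tendsto (fun r : ℝ => 1 - r) (𝓝 1) (𝓝 (1 - 1)))

theorem tendsto_ofReal_nhdsLT : Tendsto (fun r : ℝ => (r : ℂ)) (𝓝[<] 1) (𝓝 1) := by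
  simpa using (Complex.continuous_ofReal.tendsto 1).mono_left nhdsWithin_le_nhds

theorem isLittleO_one_sub_pow_pow {m n : ℕ} (h : m < n) :
    (fun r : ℝ => (1 - r) ^ n) =o[𝓝[<] 1] fun r => (1 - r) ^ m :=
  (isLittleO_pow_pow h).comp_tendsto tendsto_one_sub_nhdsLT_zero

theorem NTBigO.isBigO_nhdsLT {f : ℂ → ℂ} {m : ℕ} (hf : NTBigO f m) :
    (fun r : ℝ => f r) =O[𝓝[<] 1] fun r => (1 - r) ^ m := by
  have hK : Tendsto (fun r : ℝ => (r : ℂ)) (𝓝[<] 1) (𝓝[stolzRegion 2] 1) := by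
    refine tendsto_nhdsWithin_iff.2 ⟨tendsto_ofReal_nhdsLT, ?_⟩
    filter_upwards [Ioo_mem_nhdsLT zero_lt_one] with r ⟨hr₀, hr₁⟩
    have h : ‖(r : ℂ) - 1‖ = 1 - r := by
      rw [← Complex.ofReal_one, ← Complex.ofReal_sub, Complex.norm_real, Real.norm_eq_abs,
        abs_of_neg (by linarith)]
      ring
    refine ⟨ofReal_mem_unitDisk hr₀.le hr₁, ?_⟩
    rw [h, Complex.norm_real, Real.norm_eq_abs, abs_of_pos hr₀]
    linarith
  refine ((hf 2 one_lt_two).comp_tendsto hK).trans (IsBigO.of_bound 1 (Eventually.of_forall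
    fun r => ?_))
  rw [Function.comp_apply, norm_pow, norm_pow, ← Complex.ofReal_one, ← Complex.ofReal_sub,
    Complex.norm_real, Real.norm_eq_abs, Real.norm_eq_abs, abs_sub_comm, one_mul]

theorem norm_one_sub_conj_mul_sq_sub_norm_sub_sq (a w : ℂ) :
    ‖1 - conj a * w‖ ^ 2 - ‖w - a‖ ^ 2 = (1 - ‖a‖ ^ 2) * (1 - ‖w‖ ^ 2) := by
  simp only [Complex.sq_norm, Complex.normSq_apply, Complex.sub_re, Complex.sub_im,
    Complex.one_re, Complex.one_im, Complex.mul_re, Complex.mul_im, Complex.conj_re,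
    Complex.conj_im]
  ring

theorem one_sub_conj_mul_ne_zero {a w : ℂ} (ha : ‖a‖ < 1) (hw : ‖w‖ ≤ 1) :
    1 - conj a * w ≠ 0 := by
  refine sub_ne_zero.2 fun h => ?_
  have : ‖conj a * w‖ < 1 := by
    rw [norm_mul, Complex.norm_conj]
    exact mul_lt_one_of_nonneg_of_lt_one_left (norm_nonneg a) ha hw
  simp [← h] at this

theorem norm_sub_div_one_sub_conj_mul_le_one {a w : ℂ} (ha : ‖a‖ < 1) (hw : ‖w‖ ≤ 1) :
    ‖(w - a) / (1 - conj a * w)‖ ≤ 1 := by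
  have hne := one_sub_conj_mul_ne_zero ha hw
  rw [norm_div, div_le_one (norm_pos_iff.2 hne)]
  have := norm_one_sub_conj_mul_sq_sub_norm_sub_sq a w
  have : ‖w‖ ^ 2 ≤ 1 := pow_le_one₀ (norm_nonneg w) hw
  have : ‖a‖ ^ 2 < 1 := pow_lt_one₀ (norm_nonneg a) ha two_ne_zero
  nlinarith [norm_nonneg (w - a), norm_nonneg (1 - conj a * w)]

theorem norm_sub_div_one_sub_conj_mul_lt_one {a w : ℂ} (ha : ‖a‖ < 1) (hw : ‖w‖ < 1) :
    ‖(w - a) / (1 - conj a * w)‖ < 1 := by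
  have hne := one_sub_conj_mul_ne_zero ha hw.le
  rw [norm_div, div_lt_one (norm_pos_iff.2 hne)]
  have := norm_one_sub_conj_mul_sq_sub_norm_sub_sq a w
  have : ‖w‖ ^ 2 < 1 := pow_lt_one₀ (norm_nonneg w) hw two_ne_zero
  have : ‖a‖ ^ 2 < 1 := pow_lt_one₀ (norm_nonneg a) ha two_ne_zero
  nlinarith [norm_nonneg (w - a), norm_nonneg (1 - conj a * w)]

theorem sq_sub_sq_norm_le {r : ℝ} {w : ℂ} (hr₀ : 0 ≤ r) (hr₁ : r ≤ 1) (hw : ‖w‖ ≤ 1) :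
    r ^ 2 - ‖w‖ ^ 2 ≤ 2 * ‖w - r‖ := by
  have h : r - ‖w‖ ≤ ‖w - r‖ := by
    simpa [abs_of_nonneg hr₀, norm_sub_rev] using norm_sub_norm_le (r : ℂ) w
  nlinarith [norm_nonneg w, norm_nonneg (w - r)]

theorem SchurFunction.schwarz_pick_zero {g : ℂ → ℂ} (hg : SchurFunction g)
    (h₀ : ‖g 0‖ < 1) {z : ℂ} (hz : z ∈ unitDisk) :
    ‖g z - g 0‖ ≤ ‖z‖ * ‖1 - conj (g 0) * g z‖ := by
  have hne : ∀ w ∈ unitDisk, 1 - conj (g 0) * g w ≠ 0 := fun w hw =>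
    one_sub_conj_mul_ne_zero h₀ (hg.2 w hw)
  have hφ := Complex.norm_le_norm_of_mapsTo_ball
    (f := fun w => (g w - g 0) / (1 - conj (g 0) * g w))
    (unitDisk_eq_ball ▸ (hg.1.sub_const _).div ((hg.1.const_mul _).const_sub _) hne)
    (fun w hw => mem_closedBall_zero_iff.2 <|
      norm_sub_div_one_sub_conj_mul_le_one h₀ (hg.2 w (unitDisk_eq_ball ▸ hw)))
    (by simp) hz
  rwa [norm_div, div_le_iff₀ (norm_pos_iff.2 (hne z hz))] at hφ

theorem SchurFunction.schwarz_pick {g : ℂ → ℂ} (hg : SchurFunction g) {a z : ℂ}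
    (ha : a ∈ unitDisk) (hga : ‖g a‖ < 1) (hz : z ∈ unitDisk) :
    ‖g z - g a‖ * ‖1 - conj a * z‖ ≤ ‖z - a‖ * ‖1 - conj (g a) * g z‖ := by
  have ha' : ‖-a‖ < 1 := by simpa [unitDisk] using ha
  -- `ψ` is the disk automorphism sending `0` to `a`; apply Schwarz–Pick at `0` to `g ∘ ψ`.
  set ψ : ℂ → ℂ := fun w => (w - -a) / (1 - conj (-a) * w)
  have hψ : MapsTo ψ unitDisk unitDisk := fun w hw =>
    norm_sub_div_one_sub_conj_mul_lt_one ha' hw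
  have hgψ : SchurFunction (g ∘ ψ) :=
    ⟨hg.1.comp ((differentiableOn_id.sub_const _).div
      ((differentiableOn_id.const_mul _).const_sub _)
      fun w hw => one_sub_conj_mul_ne_zero ha' (le_of_lt hw)) hψ,
      fun w hw => hg.2 _ (hψ hw)⟩
  have hden : 1 - conj a * z ≠ 0 := one_sub_conj_mul_ne_zero ha (le_of_lt hz)
  have hw : (z - a) / (1 - conj a * z) ∈ unitDisk := norm_sub_div_one_sub_conj_mul_lt_one ha hz
  have hψw : ψ ((z - a) / (1 - conj a * z)) = z := by
    have : 1 + conj a * ((z - a) / (1 - conj a * z)) ≠ 0 := by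
      simpa [ψ] using one_sub_conj_mul_ne_zero ha' (le_of_lt hw)
    simp only [ψ, map_neg, neg_mul, sub_neg_eq_add] at this ⊢
    have hden' : 1 - z * conj a ≠ 0 := by rwa [mul_comm]
    rw [div_eq_iff this]
    field_simp
    ring
  have hψ0 : ψ 0 = a := by simp [ψ]
  have := hgψ.schwarz_pick_zero (by simpa [hψ0] using hga) hw
  simp only [Function.comp_apply, hψ0, hψw, norm_div] at this
  rwa [div_mul_eq_mul_div, le_div_iff₀ (norm_pos_iff.2 hden)] at this

theorem SchurFunction.schwarz_pick_one_sub_sq_norm {g : ℂ → ℂ} (hg : SchurFunction g) {a z : ℂ}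
    (ha : a ∈ unitDisk) (hga : ‖g a‖ < 1) (hz : z ∈ unitDisk) :
    (1 - ‖z‖ ^ 2) * (1 - ‖a‖ ^ 2) * ‖1 - conj (g a) * g z‖ ^ 2 ≤
      (1 - ‖g a‖ ^ 2) * (1 - ‖g z‖ ^ 2) * ‖1 - conj a * z‖ ^ 2 := by
  have h := pow_le_pow_left₀ (by positivity) (hg.schwarz_pick ha hga hz) 2
  have e₁ := norm_one_sub_conj_mul_sq_sub_norm_sub_sq a z
  have e₂ := norm_one_sub_conj_mul_sq_sub_norm_sub_sq (g a) (g z)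
  rw [mul_pow, mul_pow] at h
  linear_combination h - ‖1 - conj (g a) * g z‖ ^ 2 * e₁ + ‖1 - conj a * z‖ ^ 2 * e₂

theorem SchurFunction.eq_one_of_isLittleO {g : ℂ → ℂ} (hg : SchurFunction g)
    (ho : (fun r : ℝ => g r - 1) =o[𝓝[<] 1] fun r => 1 - r) {z : ℂ} (hz : z ∈ unitDisk) :
    g z = 1 := by
  have hlim : Tendsto (fun r : ℝ => g r) (𝓝[<] 1) (𝓝 1) := by
    simpa using (ho.trans_tendsto tendsto_one_sub_nhdsLT_zero).add_const 1
  have hdisk : ∀ᶠ r : ℝ in 𝓝[<] 1, (r : ℂ) ∈ unitDisk ∧ 0 ≤ r ∧ r < 1 := by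
    filter_upwards [Ioo_mem_nhdsLT zero_lt_one] with r hr
    exact ⟨ofReal_mem_unitDisk hr.1.le hr.2, hr.1.le, hr.2⟩
  have h0 : (0 : ℂ) ∈ unitDisk := by simp [unitDisk]
  rcases (hg.2 0 h0).lt_or_eq with h₀ | h₀
  · set a := g 0 with ha_def
    -- Schwarz–Pick at `0`; as `r → 1` this forces `conj a = 1`, impossible for `‖a‖ < 1`.
    have hbound : ∀ᶠ r : ℝ in 𝓝[<] 1,
        ‖1 - conj a * g r‖ ^ 2 ≤ 2 * (1 - ‖a‖ ^ 2) * (‖g r - 1‖ / (1 - r)) := by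
      filter_upwards [hdisk] with r ⟨hr, hr₀, hr₁⟩
      have hsp := pow_le_pow_left₀ (norm_nonneg _) (hg.schwarz_pick_zero h₀ hr) 2
      rw [← ha_def] at hsp
      have e := norm_one_sub_conj_mul_sq_sub_norm_sub_sq a (g r)
      have hsq := sq_sub_sq_norm_le zero_le_one le_rfl (hg.2 _ hr)
      have ha₁ : 0 ≤ 1 - ‖a‖ ^ 2 := by nlinarith [norm_nonneg a]
      rw [mul_pow, Complex.norm_real, Real.norm_eq_abs, sq_abs] at hsp
      rw [mul_div_assoc', le_div_iff₀ (by linarith)]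
      push_cast at hsq
      have hr₂ : r ^ 2 ≤ r := by nlinarith
      nlinarith [mul_le_mul_of_nonneg_left hsq ha₁,
        mul_le_mul_of_nonneg_left hr₂ (sq_nonneg ‖1 - conj a * g r‖)]
    have hlhs : Tendsto (fun r : ℝ => ‖1 - conj a * g r‖ ^ 2) (𝓝[<] 1) (𝓝 (‖1 - conj a‖ ^ 2)) := by
      simpa using ((tendsto_const_nhds.sub (tendsto_const_nhds.mul hlim)).norm.pow 2)
    have hrhs : Tendsto (fun r : ℝ => 2 * (1 - ‖a‖ ^ 2) * (‖g r - 1‖ / (1 - r))) (𝓝[<] 1)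
        (𝓝 0) := by
      simpa using (ho.norm_left.tendsto_div_nhds_zero).const_mul (2 * (1 - ‖a‖ ^ 2))
    have hle := le_of_tendsto_of_tendsto hlhs hrhs hbound
    have : conj a = 1 := by
      have : ‖1 - conj a‖ = 0 := by nlinarith [norm_nonneg (1 - conj a)]
      rw [norm_eq_zero, sub_eq_zero] at this
      exact this.symm
    have : ‖a‖ = 1 := by simpa using congrArg norm this
    linarith
  · have hconst := Complex.eqOn_of_isPreconnected_of_isMaxOn_norm
      (unitDisk_eq_ball ▸ (convex_ball (0 : ℂ) 1).isPreconnected)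
      (unitDisk_eq_ball ▸ isOpen_ball) hg.1 h0 fun w hw => by simpa [h₀] using hg.2 w hw
    have : g 0 = 1 := tendsto_nhds_unique
      (tendsto_const_nhds.congr' (hdisk.mono fun r hr => (hconst hr.1).symm)) hlim
    rw [hconst hz, Function.const_apply, this]

theorem eq_of_norm_le_of_isLittleO {g : ℂ → ℂ} {c : ℂ} (hd : DifferentiableOn ℂ g unitDisk)
    (hle : ∀ z ∈ unitDisk, ‖g z‖ ≤ ‖c‖)
    (ho : (fun r : ℝ => g r - c) =o[𝓝[<] 1] fun r => 1 - r) {z : ℂ} (hz : z ∈ unitDisk) :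
    g z = c := by
  rcases eq_or_ne c 0 with rfl | hc
  · simpa using hle z hz
  have hschur : SchurFunction fun w => g w / c :=
    ⟨hd.div_const c, fun w hw => by
      rw [norm_div]; exact div_le_one_of_le₀ (hle w hw) (norm_nonneg c)⟩
  have ho' : (fun r : ℝ => g r / c - 1) =o[𝓝[<] 1] fun r => 1 - r := by
    refine (ho.const_mul_left c⁻¹).congr_left fun r => ?_
    field_simp
  exact (div_eq_one_iff_eq hc).1 (hschur.eq_one_of_isLittleO ho' hz)

theorem norm_one_sub_le_norm_one_add {w : ℂ} (hw : 0 ≤ w.re) : ‖1 - w‖ ≤ ‖1 + w‖ := by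
  rw [← sq_le_sq₀ (norm_nonneg _) (norm_nonneg _), Complex.sq_norm, Complex.sq_norm]
  simp only [Complex.normSq_apply, Complex.sub_re, Complex.sub_im, Complex.add_re,
    Complex.add_im, Complex.one_re, Complex.one_im]
  nlinarith

theorem eq_zero_of_re_nonneg_of_isLittleO {h : ℂ → ℂ} (hd : DifferentiableOn ℂ h unitDisk)
    (hre : ∀ z ∈ unitDisk, 0 ≤ (h z).re)
    (ho : (fun r : ℝ => h r) =o[𝓝[<] 1] fun r => 1 - r) {z : ℂ} (hz : z ∈ unitDisk) :
    h z = 0 := by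
  have hre₁ : ∀ w ∈ unitDisk, 1 ≤ ‖1 + h w‖ := fun w hw =>
    le_trans (by simpa using hre w hw) (Complex.re_le_norm (1 + h w))
  have hne : ∀ w ∈ unitDisk, 1 + h w ≠ 0 := fun w hw =>
    norm_pos_iff.1 (zero_lt_one.trans_le (hre₁ w hw))
  have hschur : SchurFunction fun w => (1 - h w) / (1 + h w) :=
    ⟨(hd.const_sub 1).div (hd.const_add 1) hne, fun w hw => by
      rw [norm_div]
      exact div_le_one_of_le₀ (norm_one_sub_le_norm_one_add (hre w hw)) (norm_nonneg _)⟩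
  have hO : (fun r : ℝ => (1 - h r) / (1 + h r) - 1) =O[𝓝[<] 1] fun r => h r := by
    refine IsBigO.of_bound 2 ?_
    filter_upwards [Ioo_mem_nhdsLT zero_lt_one] with r hr
    have hr' := ofReal_mem_unitDisk hr.1.le hr.2
    rw [div_sub_one (hne _ hr'), norm_div, div_le_iff₀ (norm_pos_iff.2 (hne _ hr'))]
    calc ‖1 - h r - (1 + h r)‖ = 2 * ‖h r‖ := by
          rw [show 1 - h r - (1 + h r) = -2 * h r by ring, norm_mul]; simp
      _ ≤ 2 * ‖h r‖ * ‖1 + h r‖ := le_mul_of_one_le_right (by positivity) (hre₁ _ hr')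
  have := hschur.eq_one_of_isLittleO (hO.trans_isLittleO ho) hz
  rw [div_eq_one_iff_eq (hne z hz)] at this
  linear_combination -this / 2

theorem julia_inequality {t : ℂ → ℂ} (hd : DifferentiableOn ℂ t unitDisk)
    (hmaps : MapsTo t unitDisk unitDisk)
    (ho : (fun r : ℝ => t r - r) =o[𝓝[<] 1] fun r => 1 - r) {z : ℂ} (hz : z ∈ unitDisk) :
    (1 - ‖z‖ ^ 2) * ‖1 - t z‖ ^ 2 ≤ (1 - ‖t z‖ ^ 2) * ‖1 - z‖ ^ 2 := by
  have ht : SchurFunction t := ⟨hd, fun w hw => (hmaps hw).le⟩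
  have hlim : Tendsto (fun r : ℝ => t r) (𝓝[<] 1) (𝓝 1) := by
    simpa using (ho.trans_tendsto tendsto_one_sub_nhdsLT_zero).add tendsto_ofReal_nhdsLT
  -- Schwarz–Pick for the pair `z, r`, then `r → 1`
  have hbound : ∀ᶠ r : ℝ in 𝓝[<] 1, (1 - ‖z‖ ^ 2) * ‖1 - conj (t r) * t z‖ ^ 2 ≤
      (1 + 2 * (‖t r - r‖ / (1 - r))) * ((1 - ‖t z‖ ^ 2) * ‖1 - r * z‖ ^ 2) := by
    filter_upwards [Ioo_mem_nhdsLT zero_lt_one] with r ⟨hr₀, hr₁⟩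
    have hr := ofReal_mem_unitDisk hr₀.le hr₁
    have hsp := ht.schwarz_pick_one_sub_sq_norm hr (hmaps hr) hz
    rw [Complex.conj_ofReal, Complex.norm_real, Real.norm_eq_abs, sq_abs] at hsp
    have htr : 1 - ‖t r‖ ^ 2 ≤ (1 - r ^ 2) * (1 + 2 * (‖t r - r‖ / (1 - r))) := by
      have := sq_sub_sq_norm_le hr₀.le hr₁.le (hmaps hr).le
      rw [show (1 - r ^ 2) * (1 + 2 * (‖t r - r‖ / (1 - r))) =
        1 - r ^ 2 + 2 * (1 + r) * ‖t r - r‖ by field_simp; ring]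
      nlinarith [norm_nonneg (t r - r)]
    have hK : 0 ≤ (1 - ‖t z‖ ^ 2) * ‖1 - r * z‖ ^ 2 := by
      have : ‖t z‖ ^ 2 ≤ 1 := pow_le_one₀ (norm_nonneg _) (hmaps hz).le
      positivity
    refine le_of_mul_le_mul_left ?_ (by nlinarith : 0 < 1 - r ^ 2)
    calc (1 - r ^ 2) * ((1 - ‖z‖ ^ 2) * ‖1 - conj (t r) * t z‖ ^ 2)
        = (1 - ‖z‖ ^ 2) * (1 - r ^ 2) * ‖1 - conj (t r) * t z‖ ^ 2 := by ring
      _ ≤ (1 - ‖t r‖ ^ 2) * ((1 - ‖t z‖ ^ 2) * ‖1 - r * z‖ ^ 2) := by linarith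
      _ ≤ _ := by nlinarith
  have hlhs : Tendsto (fun r : ℝ => (1 - ‖z‖ ^ 2) * ‖1 - conj (t r) * t z‖ ^ 2) (𝓝[<] 1)
      (𝓝 ((1 - ‖z‖ ^ 2) * ‖1 - t z‖ ^ 2)) := by
    simpa using tendsto_const_nhds.mul
      ((tendsto_const_nhds.sub ((Complex.continuous_conj.tendsto 1).comp hlim |>.mul
        tendsto_const_nhds)).norm.pow 2)
  have hrhs : Tendsto (fun r : ℝ => (1 + 2 * (‖t r - r‖ / (1 - r))) *
      ((1 - ‖t z‖ ^ 2) * ‖1 - r * z‖ ^ 2)) (𝓝[<] 1) (𝓝 ((1 - ‖t z‖ ^ 2) * ‖1 - z‖ ^ 2)) := by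
    have h₁ := (ho.norm_left.tendsto_div_nhds_zero.const_mul (2 : ℝ)).const_add (1 : ℝ)
    have h₂ := (((tendsto_const_nhds (x := (1 : ℂ))).sub
      (tendsto_ofReal_nhdsLT.mul (tendsto_const_nhds (x := z)))).norm.pow 2).const_mul
        (1 - ‖t z‖ ^ 2)
    simpa using h₁.mul h₂
  exact le_of_tendsto_of_tendsto hlhs hrhs hbound

theorem re_one_add_div_one_sub (w : ℂ) :
    ((1 + w) / (1 - w)).re = (1 - ‖w‖ ^ 2) / ‖1 - w‖ ^ 2 := by
  rw [Complex.div_re, ← add_div, Complex.sq_norm, Complex.sq_norm]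
  congr 1
  simp only [Complex.add_re, Complex.add_im, Complex.sub_re, Complex.sub_im, Complex.one_re,
    Complex.one_im, Complex.normSq_apply]
  ring

theorem norm_one_add_div_one_sub_sub_le {r : ℝ} {w : ℂ} (hr : r < 1)
    (hw : ‖w - r‖ ≤ (1 - r) / 2) :
    ‖(1 + w) / (1 - w) - (1 + r) / (1 - r)‖ ≤ 4 * ‖w - r‖ / (1 - r) ^ 2 := by
  have hr' : (1 : ℂ) - r ≠ 0 := by exact_mod_cast (sub_pos.2 hr).ne'
  have h1w : (1 - r) / 2 ≤ ‖1 - w‖ := by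
    have := norm_sub_norm_le ((1 - r : ℝ) : ℂ) (w - r)
    rw [Complex.norm_real, Real.norm_eq_abs, abs_of_pos (sub_pos.2 hr)] at this
    push_cast at this
    rw [show (1 : ℂ) - r - (w - r) = 1 - w by ring] at this
    linarith
  have hw' : (1 : ℂ) - w ≠ 0 := norm_pos_iff.1 (by linarith)
  rw [div_sub_div _ _ hw' hr', show (1 + w) * (1 - r) - (1 - w) * (1 + r) = 2 * (w - r) by ring,
    norm_div, norm_mul, norm_mul, show ‖(1 : ℂ) - r‖ = 1 - r by
      exact_mod_cast (Complex.norm_real _).trans (abs_of_pos (sub_pos.2 hr)),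
    div_le_div_iff₀ (by nlinarith) (by nlinarith)]
  simp only [Complex.norm_ofNat]
  nlinarith [mul_le_mul_of_nonneg_left h1w (mul_nonneg (norm_nonneg (w - r)) (sub_pos.2 hr).le)]

theorem eq_self_of_isLittleO {t : ℂ → ℂ} (hd : DifferentiableOn ℂ t unitDisk)
    (hmaps : MapsTo t unitDisk unitDisk)
    (ho : (fun r : ℝ => t r - r) =o[𝓝[<] 1] fun r => (1 - r) ^ 3) {z : ℂ}
    (hz : z ∈ unitDisk) : t z = z := by
  have ho₁ : (fun r : ℝ => t r - r) =o[𝓝[<] 1] fun r => 1 - r :=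
    ho.trans_isBigO (by simpa using (isLittleO_one_sub_pow_pow (by norm_num : 1 < 3)).isBigO)
  -- Julia's inequality says exactly that `h` has nonnegative real part.
  set h : ℂ → ℂ := fun w => (1 + t w) / (1 - t w) - (1 + w) / (1 - w)
  have hdh : DifferentiableOn ℂ h unitDisk :=
    ((hd.const_add 1).div (hd.const_sub 1) fun w hw =>
      one_sub_ne_zero_of_mem_unitDisk (hmaps hw)).sub
      ((differentiableOn_id.const_add 1).div (differentiableOn_id.const_sub 1)
        fun w hw => one_sub_ne_zero_of_mem_unitDisk hw)
  have hre : ∀ w ∈ unitDisk, 0 ≤ (h w).re := fun w hw => by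
    rw [Complex.sub_re, re_one_add_div_one_sub, re_one_add_div_one_sub, sub_nonneg,
      div_le_div_iff₀ (pow_pos (norm_pos_iff.2 (one_sub_ne_zero_of_mem_unitDisk hw)) 2)
      (pow_pos (norm_pos_iff.2 (one_sub_ne_zero_of_mem_unitDisk (hmaps hw))) 2)]
    exact julia_inequality hd hmaps ho₁ hw
  have hoh : (fun r : ℝ => h r) =o[𝓝[<] 1] fun r => 1 - r := by
    refine isLittleO_iff.2 fun c hc => ?_
    filter_upwards [isLittleO_iff.1 ho (by positivity : 0 < c / 4),
      isLittleO_iff.1 ho₁ (by norm_num : (0 : ℝ) < 1 / 2), Ioo_mem_nhdsLT zero_lt_one]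
      with r hc₄ hhalf ⟨hr₀, hr₁⟩
    rw [Real.norm_eq_abs, abs_of_pos (sub_pos.2 hr₁)] at hhalf ⊢
    rw [Real.norm_eq_abs, abs_pow, abs_of_pos (sub_pos.2 hr₁)] at hc₄
    refine (norm_one_add_div_one_sub_sub_le hr₁ (by linarith)).trans ?_
    rw [div_le_iff₀ (by positivity)]
    nlinarith
  have h0 := eq_zero_of_re_nonneg_of_isLittleO hdh hre hoh hz
  rw [sub_eq_zero, div_eq_div_iff (one_sub_ne_zero_of_mem_unitDisk (hmaps hz))
    (one_sub_ne_zero_of_mem_unitDisk hz)] at h0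
  linear_combination h0 / 2

theorem sq_norm_one_sub_lt_iff {α : ℝ} (hα : α ∈ Ioo 0 1) (w : ℂ) :
    ‖1 - w‖ ^ 2 < α / (1 - α) * (1 - ‖w‖ ^ 2) ↔ ‖w - (1 - α)‖ < α := by
  rw [← sq_lt_sq₀ (norm_nonneg _) hα.1.le, div_mul_eq_mul_div, lt_div_iff₀ (sub_pos.2 hα.2)]
  have e : α * (1 - ‖w‖ ^ 2) - (1 - α) * ‖1 - w‖ ^ 2 = α ^ 2 - ‖w - (1 - α)‖ ^ 2 := by
    simp only [Complex.sq_norm, Complex.normSq_apply, Complex.sub_re, Complex.sub_im,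
      Complex.one_re, Complex.one_im, Complex.ofReal_re, Complex.ofReal_im]
    ring
  constructor <;> intro h <;> linarith

theorem eq_of_norm_sub_lt_of_isBigO {α : ℝ} (hα : 0 < α) {s : ℂ → ℂ}
    (hd : DifferentiableOn ℂ s unitDisk) (hlt : ∀ z ∈ unitDisk, ‖s z - (1 - α)‖ < α)
    (hO : (fun r : ℝ => s r - (α * r + 1 - α)) =O[𝓝[<] 1] fun r => (1 - r) ^ 4)
    {z : ℂ} (hz : z ∈ unitDisk) : s z = α * z + 1 - α := by
  have hα' : (α : ℂ) ≠ 0 := by exact_mod_cast hα.ne'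
  have ho : (fun r : ℝ => (s r - (1 - α)) / α - r) =o[𝓝[<] 1] fun r => (1 - r) ^ 3 :=
    ((hO.const_mul_left (α : ℂ)⁻¹).trans_isLittleO (isLittleO_one_sub_pow_pow (by norm_num))
      ).congr_left fun r => by field_simp; ring
  have := eq_self_of_isLittleO (t := fun w => (s w - (1 - α)) / α) ((hd.sub_const _).div_const _)
    (fun w hw => by
      simpa [unitDisk, norm_div, abs_of_pos hα, div_lt_one hα] using hlt w hw) ho hz
  rw [div_eq_iff hα'] at this
  linear_combination this

section Relation

variable {a z σ w : ℂ}

theorem eq_affine_iff_of_relation (ha : a ≠ 0) (hz : 1 - z ≠ 0)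
    (hE : 2 * a + 1 - z * (2 * a - 1) - (1 + z) * w ≠ 0)
    (h : σ * (2 * a + 1 - z * (2 * a - 1) - (1 + z) * w) =
      (2 * a - 1 - z * (2 * a + 1)) * w + 1 + z) :
    σ = a * z + 1 - a ↔ w = 1 - 2 * a := by
  rw [← sub_eq_zero, ← mul_eq_zero_iff_right hE,
    show (σ - (a * z + 1 - a)) * (2 * a + 1 - z * (2 * a - 1) - (1 + z) * w) =
      a * (1 - z) ^ 2 * (w - (1 - 2 * a)) by linear_combination h,
    mul_eq_zero_iff_left (mul_ne_zero ha (pow_ne_zero 2 hz)), sub_eq_zero]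

theorem norm_le_iff_of_relation (ha : a ≠ 0) (hz : 1 - z ≠ 0)
    (h : σ * (2 * a + 1 - z * (2 * a - 1) - (1 + z) * w) =
      (2 * a - 1 - z * (2 * a + 1)) * w + 1 + z) (ρ : ℝ) :
    ‖w‖ ≤ ρ ↔ ‖(2 * a + 1 - z * (2 * a - 1)) * σ - 1 - z‖ ≤
      ρ * ‖(2 * a - 1 - z * (2 * a + 1)) + (1 + z) * σ‖ := by
  have hX : (2 * a - 1 - z * (2 * a + 1)) + (1 + z) * σ ≠ 0 := by
    refine left_ne_zero_of_mul (b := 2 * a + 1 - z * (2 * a - 1) - (1 + z) * w) ?_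
    rw [show ((2 * a - 1 - z * (2 * a + 1)) + (1 + z) * σ) *
      (2 * a + 1 - z * (2 * a - 1) - (1 + z) * w) = 4 * a ^ 2 * (1 - z) ^ 2 by
        linear_combination (1 + z) * h]
    exact mul_ne_zero (mul_ne_zero (by norm_num) (pow_ne_zero 2 ha)) (pow_ne_zero 2 hz)
  rw [show (2 * a + 1 - z * (2 * a - 1)) * σ - 1 - z =
      w * ((2 * a - 1 - z * (2 * a + 1)) + (1 + z) * σ) by linear_combination h,
    norm_mul, mul_le_mul_iff_of_pos_right (norm_pos_iff.2 hX)]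

end Relation

theorem relation_denom_ne_zero {α : ℝ} (hα : 0 < α) {z w : ℂ} (hz : z ∈ unitDisk)
    (hw : ‖w‖ ≤ 1) : 2 * (α : ℂ) + 1 - z * (2 * α - 1) - (1 + z) * w ≠ 0 := by
  intro h
  have hsq : ‖2 * (α : ℂ) + 1 - z * (2 * α - 1)‖ ^ 2 ≤ ‖1 + z‖ ^ 2 := by
    rw [show 2 * (α : ℂ) + 1 - z * (2 * α - 1) = (1 + z) * w by linear_combination h, norm_mul,
      mul_pow]
    exact mul_le_of_le_one_right (by positivity) (pow_le_one₀ (norm_nonneg w) hw)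
  have e : ‖2 * (α : ℂ) + 1 - z * (2 * α - 1)‖ ^ 2 - ‖1 + z‖ ^ 2 =
      4 * α ^ 2 * ‖1 - z‖ ^ 2 + 4 * α * (1 - ‖z‖ ^ 2) := by
    simp only [Complex.sq_norm, Complex.normSq_apply, Complex.sub_re, Complex.sub_im,
      Complex.add_re, Complex.add_im, Complex.mul_re, Complex.mul_im, Complex.one_re,
      Complex.one_im, Complex.ofReal_re, Complex.ofReal_im, Complex.re_ofNat, Complex.im_ofNat]
    ring
  have hz' : ‖z‖ ^ 2 < 1 := pow_lt_one₀ (norm_nonneg z) hz two_ne_zero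
  nlinarith [sq_nonneg ‖1 - z‖]

theorem norm_relation_denom_le {α : ℝ} (hα : α ∈ Icc 0 1) {z w : ℂ} (hz : ‖z‖ ≤ 1)
    (hw : ‖w‖ ≤ 1) : ‖2 * (α : ℂ) + 1 - z * (2 * α - 1) - (1 + z) * w‖ ≤ 6 := by
  have h₁ : ‖2 * (α : ℂ) + 1‖ ≤ 3 := by
    rw [show 2 * (α : ℂ) + 1 = ((2 * α + 1 : ℝ) : ℂ) by push_cast; ring, Complex.norm_real,
      Real.norm_eq_abs, abs_le]
    constructor <;> linarith [hα.1, hα.2]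
  have h₂ : ‖z * (2 * (α : ℂ) - 1)‖ ≤ 1 := by
    rw [norm_mul, show 2 * (α : ℂ) - 1 = ((2 * α - 1 : ℝ) : ℂ) by push_cast; ring,
      Complex.norm_real, Real.norm_eq_abs]
    exact mul_le_one₀ hz (abs_nonneg _) (abs_le.2 ⟨by linarith [hα.1], by linarith [hα.2]⟩)
  have h₃ : ‖(1 + z) * w‖ ≤ 2 := by
    rw [norm_mul]
    have : ‖1 + z‖ ≤ 2 := (norm_add_le 1 z).trans (by simp; linarith)
    nlinarith [norm_nonneg w, norm_nonneg (1 + z)]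
  calc _ ≤ ‖2 * (α : ℂ) + 1‖ + ‖z * (2 * (α : ℂ) - 1)‖ + ‖(1 + z) * w‖ :=
        (norm_sub_le _ _).trans (add_le_add_left (norm_sub_le _ _) _)
    _ ≤ 6 := by linarith

theorem isBigO_of_relation {α : ℝ} (hα : α ∈ Ioo 0 1) {s s₁ : ℂ → ℂ}
    (hs₁ : ∀ z ∈ unitDisk, ‖s₁ z‖ ≤ 1)
    (hrel : ∀ z ∈ unitDisk, s z * (2 * α + 1 - z * (2 * α - 1) - (1 + z) * s₁ z) =
      (2 * α - 1 - z * (2 * α + 1)) * s₁ z + 1 + z)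
    (hO : (fun r : ℝ => s r - (α * r + 1 - α)) =O[𝓝[<] 1] fun r => (1 - r) ^ 4) :
    (fun r : ℝ => s₁ r - (1 - 2 * α)) =O[𝓝[<] 1] fun r => (1 - r) ^ 2 := by
  obtain ⟨C, hC⟩ := hO.bound
  refine IsBigO.of_bound (6 * C / α) ?_
  filter_upwards [hC, Ioo_mem_nhdsLT zero_lt_one] with r hCr ⟨hr₀, hr₁⟩
  have hr := ofReal_mem_unitDisk hr₀.le hr₁
  have hE := norm_relation_denom_le ⟨hα.1.le, hα.2.le⟩ (le_of_lt hr) (hs₁ r hr)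
  have h := congrArg norm (show (s r - (α * r + 1 - α)) *
      (2 * α + 1 - r * (2 * α - 1) - (1 + r) * s₁ r) = α * (1 - r) ^ 2 * (s₁ r - (1 - 2 * α))
    by linear_combination hrel r hr)
  have h1r : ‖(1 : ℂ) - r‖ = 1 - r := by
    rw [← Complex.ofReal_one, ← Complex.ofReal_sub, Complex.norm_real, Real.norm_eq_abs,
      abs_of_pos (by linarith)]
  simp only [norm_mul, norm_pow, h1r, Complex.norm_real, Real.norm_eq_abs, abs_of_pos hα.1,
    abs_of_pos (sub_pos.2 hr₁)] at h hCr ⊢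
  rw [div_mul_eq_mul_div, le_div_iff₀ hα.1]
  have hpos : 0 < (1 - r) ^ 2 := by positivity
  refine le_of_mul_le_mul_right ?_ hpos
  have hC₀ : 0 ≤ C * (1 - r) ^ 4 := (norm_nonneg _).trans hCr
  nlinarith [mul_le_mul hCr hE (norm_nonneg _) hC₀]

theorem rigidity_tfae_general (α : ℝ) (hα : α ∈ Set.Ioo (0 : ℝ) 1)
    (s s₁ : ℂ → ℂ) (hs : SchurFunction s)
    (hO : NTBigO (fun z => s z - (α * z + 1 - α)) 4)
    (hs₁ : SchurFunction s₁)
    (hrel : ∀ z ∈ unitDisk,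
      s z = ((2 * α - 1 - z * (2 * α + 1)) * s₁ z + 1 + z) /
        (2 * α + 1 - z * (2 * α - 1) - (1 + z) * s₁ z)) :
    [(∀ z ∈ unitDisk, s z = α * z + 1 - α),
     (∀ z ∈ unitDisk, s₁ z = 1 - 2 * α),
     (∀ z ∈ unitDisk, ‖s₁ z‖ ≤ |1 - 2 * α|),
     (∀ z ∈ unitDisk,
        ‖(2 * α + 1 - z * (2 * α - 1)) * s z - 1 - z‖ ≤
          |1 - 2 * α| * ‖(2 * α - 1 - z * (2 * α + 1)) + (1 + z) * s z‖),
     (∀ z ∈ unitDisk,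
        ‖1 - s z‖ ^ 2 < (α / (1 - α)) * (1 - ‖s z‖ ^ 2))].TFAE := by
  have hα' : (α : ℂ) ≠ 0 := by exact_mod_cast hα.1.ne'
  have hβ : ‖(1 : ℂ) - 2 * α‖ = |1 - 2 * α| := by exact_mod_cast Complex.norm_real (1 - 2 * α)
  have hE := fun z hz => relation_denom_ne_zero hα.1 hz (hs₁.2 z hz)
  have hcross : ∀ z ∈ unitDisk, s z * (2 * α + 1 - z * (2 * α - 1) - (1 + z) * s₁ z) =
      (2 * α - 1 - z * (2 * α + 1)) * s₁ z + 1 + z := fun z hz => by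
    rw [hrel z hz, div_mul_cancel₀ _ (hE z hz)]
  tfae_have 1 ↔ 2 := forall₂_congr fun z hz =>
    eq_affine_iff_of_relation hα' (one_sub_ne_zero_of_mem_unitDisk hz) (hE z hz) (hcross z hz)
  tfae_have 2 → 3 := fun h z hz => by rw [h z hz, hβ]
  tfae_have 3 ↔ 4 := forall₂_congr fun z hz =>
    norm_le_iff_of_relation hα' (one_sub_ne_zero_of_mem_unitDisk hz) (hcross z hz) _
  tfae_have 3 → 2 := fun h z hz => by
    refine eq_of_norm_le_of_isLittleO hs₁.1 (hβ ▸ h) ?_ hz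
    simpa using (isBigO_of_relation hα hs₁.2 hcross hO.isBigO_nhdsLT).trans_isLittleO
      (isLittleO_one_sub_pow_pow one_lt_two)
  tfae_have 1 → 5 := fun h z hz => by
    rw [sq_norm_one_sub_lt_iff hα, h z hz, show (α : ℂ) * z + 1 - α - (1 - α) = α * z by ring,
      norm_mul, Complex.norm_real, Real.norm_eq_abs, abs_of_pos hα.1]
    exact mul_lt_of_lt_one_right hα.1 hz
  tfae_have 5 → 1 := fun h z hz => eq_of_norm_sub_lt_of_isBigO hα.1 hs.1
    (fun w hw => (sq_norm_one_sub_lt_iff hα _).1 (h w hw)) hO.isBigO_nhdsLT hz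
  tfae_finish

theorem rigidity_tfae (α : ℝ) (hα : α ∈ Set.Ioo (0 : ℝ) 1)
    (s s₁ : ℂ → ℂ) (hs : SchurFunction s)
    (hO : NTBigO (fun z => s z - (α * z + 1 - α)) 4)
    (hs₁ : SchurFunction s₁) (hlim : NTLiminfPos s₁ 1)
    (hrel : ∀ z ∈ unitDisk,
      s z = ((2 * α - 1 - z * (2 * α + 1)) * s₁ z + 1 + z) /
        (2 * α + 1 - z * (2 * α - 1) - (1 + z) * s₁ z)) :
    [(∀ z ∈ unitDisk, s z = α * z + 1 - α),
     (∀ z ∈ unitDisk, s₁ z = 1 - 2 * α),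
     (∀ z ∈ unitDisk, ‖s₁ z‖ ≤ |1 - 2 * α|),
     (∀ z ∈ unitDisk,
        ‖(2 * α + 1 - z * (2 * α - 1)) * s z - 1 - z‖ ≤
          |1 - 2 * α| * ‖(2 * α - 1 - z * (2 * α + 1)) + (1 + z) * s z‖),
     (∀ z ∈ unitDisk,
        ‖1 - s z‖ ^ 2 < (α / (1 - α)) * (1 - ‖s z‖ ^ 2))].TFAE :=
  rigidity_tfae_general α hα s s₁ hs hO hs₁ hrel
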